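/- arXiv:1801.06818 — 5 statements merged into one kernel-verified Lean document; each statement's English description precedes it below -/
import Mathlib

section
/- Let y be a positive integer and ϑ, ε > 0. The total variation distance between (negbinom(y, (1+ε)^{-ϑ}) shifted down by y) and Ber(ϑyε) is at most (ε²/2)(ϑy + ϑ²(2y+1)y). -/
/-!
Write `p = (1 + ε)^(-ϑ)` and `q = ϑ y ε`. Since `p^y ≥ 1 - q`, `y p^y (1 - p) ≤ q`
and `Ber(q)` vanishes beyond `1`, the total variation distance collapses to
`q - y p^y (1 - p) = y ((ϑ ε - (1 - p)) + (1 - p)(1 - p^y))`.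
The second-order expansion `1 - a ε ≤ (1 + ε)^(-a) ≤ 1 - a ε + a (a + 1) ε² / 2`
bounds the first bracket by `ϑ (ϑ + 1) ε² / 2` and the second by `ϑ ε · ϑ y ε`.
-/

open Real

/-- The negative binomial distribution `negbinom(y, p)` shifted down by `y`:
mass at `k` is `C(y+k-1, y-1) p^y (1-p)^k`. -/
noncomputable def negbinomShift (y : ℕ) (p : ℝ) (k : ℕ) : ℝ :=
  (Nat.choose (y + k - 1) (y - 1) : ℝ) * p ^ y * (1 - p) ^ k

noncomputable def bern (q : ℝ) (k : ℕ) : ℝ :=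
  if k = 0 then 1 - q else if k = 1 then q else 0

namespace Real

lemma sub_sq_div_two_le_log_one_add {x : ℝ} (hx : 0 ≤ x) : x - x ^ 2 / 2 ≤ log (1 + x) := by
  refine le_trans ?_ (le_log_one_add_of_nonneg hx)
  rw [le_div_iff₀ (by linarith)]
  nlinarith [pow_nonneg hx 3]

lemma exp_neg_le_one_sub_add_sq_div_two {x : ℝ} (hx : 0 ≤ x) :
    exp (-x) ≤ 1 - x + x ^ 2 / 2 := by
  -- `(1 - x + x²/2)(1 + x + x²/2) = 1 + x⁴/4 ≥ 1`
  rw [exp_neg, inv_le_iff_one_le_mul₀ (exp_pos x)]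
  have hquad : 0 ≤ 1 - x + x ^ 2 / 2 := by nlinarith [sq_nonneg (x - 1)]
  calc (1 : ℝ) ≤ (1 - x + x ^ 2 / 2) * (1 + x + x ^ 2 / 2) := by nlinarith [sq_nonneg (x ^ 2)]
    _ ≤ (1 - x + x ^ 2 / 2) * exp x := by gcongr; exact quadratic_le_exp_of_nonneg hx

lemma one_add_rpow_neg_eq_exp (a : ℝ) {ε : ℝ} (hε : -1 < ε) :
    (1 + ε) ^ (-a) = exp (-(a * log (1 + ε))) := by
  rw [rpow_def_of_pos (by linarith)]
  ring_nf

lemma one_sub_mul_le_one_add_rpow_neg {a ε : ℝ} (ha : 0 ≤ a) (hε : -1 < ε) :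
    1 - a * ε ≤ (1 + ε) ^ (-a) := by
  have hlog : log (1 + ε) ≤ ε := by linarith [log_le_sub_one_of_pos (by linarith : 0 < 1 + ε)]
  rw [one_add_rpow_neg_eq_exp a hε]
  nlinarith [add_one_le_exp (-(a * log (1 + ε))), mul_le_mul_of_nonneg_left hlog ha]

lemma one_add_rpow_neg_le_quadratic {a ε : ℝ} (ha : 0 ≤ a) (hε : 0 ≤ ε) :
    (1 + ε) ^ (-a) ≤ 1 - a * ε + a * (a + 1) * ε ^ 2 / 2 := by
  set L := log (1 + ε)
  have hL : 0 ≤ L := log_nonneg (by linarith)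
  have hLε : L ≤ ε := by linarith [log_le_sub_one_of_pos (by linarith : 0 < 1 + ε)]
  have hLsq : (a * L) ^ 2 ≤ (a * ε) ^ 2 := by gcongr
  have hLlow : a * (ε - ε ^ 2 / 2) ≤ a * L :=
    mul_le_mul_of_nonneg_left (sub_sq_div_two_le_log_one_add hε) ha
  rw [one_add_rpow_neg_eq_exp a (by linarith)]
  nlinarith [exp_neg_le_one_sub_add_sq_div_two (mul_nonneg ha hL)]

end Real

lemma bern_zero (q : ℝ) : bern q 0 = 1 - q := rfl

lemma bern_one (q : ℝ) : bern q 1 = q := rfl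

lemma bern_add_two (q : ℝ) (k : ℕ) : bern q (k + 2) = 0 := by
  simp [bern]

lemma tsum_abs_sub_bern {P : ℕ → ℝ} (hP : ∀ k, 0 ≤ P k) (hsum : HasSum P 1) {q : ℝ}
    (h0 : 1 - q ≤ P 0) (h1 : P 1 ≤ q) :
    ∑' k, |P k - bern q k| = 2 * (q - P 1) := by
  have htail : HasSum (fun k ↦ P (k + 2)) (1 - (P 0 + P 1)) := by
    have := (hasSum_nat_add_iff' 2).mpr hsum
    rwa [Finset.sum_range_succ, Finset.sum_range_one] at this
  have hdiff_tail : HasSum (fun k ↦ |P (k + 2) - bern q (k + 2)|) (1 - (P 0 + P 1)) := by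
    simpa only [bern_add_two, sub_zero, fun k ↦ abs_of_nonneg (hP k)] using htail
  have hdiff := (hasSum_nat_add_iff (f := fun k ↦ |P k - bern q k|) 2).mp hdiff_tail
  rw [hdiff.tsum_eq, Finset.sum_range_succ, Finset.sum_range_one, bern_zero, bern_one,
    abs_of_nonneg (by linarith), abs_of_nonpos (by linarith)]
  ring

section NegativeBinomial

variable {y : ℕ} {p : ℝ}

lemma negbinomShift_zero : negbinomShift y p 0 = p ^ y := by
  simp [negbinomShift]

lemma negbinomShift_one (hy : 0 < y) : negbinomShift y p 1 = y * p ^ y * (1 - p) := by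
  rw [negbinomShift, Nat.add_sub_cancel, Nat.choose_symm_of_eq_add (Nat.sub_add_cancel hy).symm,
    Nat.choose_one_right, pow_one]

lemma negbinomShift_nonneg (hp₀ : 0 ≤ p) (hp₁ : p ≤ 1) (k : ℕ) :
    0 ≤ negbinomShift y p k := by
  unfold negbinomShift
  have h1p : 0 ≤ 1 - p := by linarith
  positivity

lemma hasSum_negbinomShift (hy : 0 < y) (hp : |1 - p| < 1) : HasSum (negbinomShift y p) 1 := by
  have hp₀ : p ≠ 0 := by rintro rfl; simp at hp
  have hgeom := (hasSum_choose_mul_geometric_of_norm_lt_one (y - 1) hp).mul_left (p ^ y)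
  rw [sub_sub_cancel, Nat.sub_add_cancel hy, one_div, mul_inv_cancel₀ (pow_ne_zero _ hp₀)]
    at hgeom
  have hterm (k : ℕ) :
      negbinomShift y p k = p ^ y * ((k + (y - 1)).choose (y - 1) * (1 - p) ^ k) := by
    rw [negbinomShift, show y + k - 1 = k + (y - 1) by omega]
    ring
  rw [funext hterm]
  exact hgeom

end NegativeBinomial

theorem stmt_3_general (y : ℕ) (hy : 0 < y) (ϑ ε : ℝ) (hϑ : 0 < ϑ) (hε : 0 < ε) :
    (1 / 2) * ∑' k : ℕ, |negbinomShift y ((1 + ε) ^ (-ϑ)) k - bern (ϑ * (y : ℝ) * ε) k|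
      ≤ (ε ^ 2 / 2) * (ϑ * (y : ℝ) + ϑ ^ 2 * (2 * (y : ℝ) + 1) * (y : ℝ)) := by
  set p := (1 + ε) ^ (-ϑ)
  have hp₀ : 0 < p := rpow_pos_of_pos (by linarith) _
  have hp₁ : p ≤ 1 := rpow_le_one_of_one_le_of_nonpos (by linarith) (by linarith)
  have hp_low : 1 - ϑ * ε ≤ p := one_sub_mul_le_one_add_rpow_neg hϑ.le (by linarith)
  have hp_up : p ≤ 1 - ϑ * ε + ϑ * (ϑ + 1) * ε ^ 2 / 2 :=
    one_add_rpow_neg_le_quadratic hϑ.le hε.le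
  have hpy_low : 1 - ϑ * y * ε ≤ p ^ y := by
    rw [← rpow_mul_natCast (by linarith), neg_mul]
    exact one_sub_mul_le_one_add_rpow_neg (by positivity) (by linarith)
  have hpy₁ : p ^ y ≤ 1 := pow_le_one₀ hp₀.le hp₁
  have hP1_le : negbinomShift y p 1 ≤ ϑ * y * ε := by
    calc negbinomShift y p 1 = y * p ^ y * (1 - p) := negbinomShift_one hy
      _ ≤ y * 1 * (ϑ * ε) := by gcongr; linarith
      _ = ϑ * y * ε := by ring
  rw [tsum_abs_sub_bern (negbinomShift_nonneg hp₀.le hp₁)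
    (hasSum_negbinomShift hy (by rw [abs_lt]; constructor <;> linarith))
    (by rwa [negbinomShift_zero]) hP1_le, negbinomShift_one hy]
  calc 1 / 2 * (2 * (ϑ * y * ε - y * p ^ y * (1 - p)))
      = y * ((ϑ * ε - (1 - p)) + (1 - p) * (1 - p ^ y)) := by ring
    _ ≤ y * (ϑ * (ϑ + 1) * ε ^ 2 / 2 + ϑ * ε * (ϑ * y * ε)) := by
      gcongr <;> linarith
    _ = (ε ^ 2 / 2) * (ϑ * y + ϑ ^ 2 * (2 * y + 1) * y) := by ring

/-- For a positive integer `y` and `ϑ, ε > 0`, the total variation distance between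
`negbinom(y, (1+ε)^{-ϑ}) - y` and `Ber(ϑ y ε)` is at most `(ε²/2)(ϑ y + ϑ²(2y+1)y)`. -/
theorem stmt_3 (y : ℕ) (hy : 0 < y) (ϑ ε : ℝ) (hϑ : 0 < ϑ) (hε : 0 < ε)
    (hq : ϑ * (y : ℝ) * ε ≤ 1) :
    (1 / 2) * ∑' k : ℕ, |negbinomShift y ((1 + ε) ^ (-ϑ)) k - bern (ϑ * (y : ℝ) * ε) k|
      ≤ (ε ^ 2 / 2) * (ϑ * (y : ℝ) + ϑ ^ 2 * (2 * (y : ℝ) + 1) * (y : ℝ)) :=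
  stmt_3_general y hy ϑ ε hϑ hε
end

section
/- For integers n ≥ m ≥ 1 and θ > 0, the integral (1/T)∫₀^T π_n(ln(T/t), θ, m) dt equals Γ(1/θ + m)Γ(n) / (θ Γ(m) Γ(n + 1/θ + 1)), where π_n(s, θ, m) = binom(n-1, m-1) e^{-mθs}(1-e^{-θs})^{n-m}. -/
/-!
Writing `u = t / T`, the integrand becomes `C(n-1,m-1) u^{mθ} (1 - u^θ)^{n-m}` and the factor `1/T`
absorbs the Jacobian, so the integral does not depend on `T`. The further substitution `v = u^θ`
turns `∫₀¹ u^{mθ} (1 - u^θ)^{n-m} du` into `θ⁻¹ B(m + 1/θ, n - m + 1)`, and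
`C(n-1,m-1) Γ(n-m+1) = Γ(n) / Γ(m)` gives the Gamma quotient.
-/

open Real MeasureTheory Set

theorem integral_rpow_mul_one_sub_rpow_eq_beta {α β : ℝ} (hα : 0 < α) (hβ : 0 < β) :
    ∫ x in (0:ℝ)..1, x ^ (α - 1) * (1 - x) ^ (β - 1) = ProbabilityTheory.beta α β := by
  have hofReal : EqOn (fun x : ℝ => (x : ℂ) ^ ((α : ℂ) - 1) * (1 - (x : ℂ)) ^ ((β : ℂ) - 1))
      (fun x => ((x ^ (α - 1) * (1 - x) ^ (β - 1) : ℝ) : ℂ)) (uIcc 0 1) := fun x hx => by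
    rw [uIcc_of_le zero_le_one] at hx
    simp only [Complex.ofReal_mul, Complex.ofReal_cpow hx.1,
      Complex.ofReal_cpow (sub_nonneg.2 hx.2), Complex.ofReal_sub, Complex.ofReal_one]
  rw [ProbabilityTheory.beta_eq_betaIntegralReal α β hα hβ, Complex.betaIntegral,
    intervalIntegral.integral_congr hofReal, intervalIntegral.integral_ofReal, Complex.ofReal_re]

theorem mul_integral_rpow_mul_one_sub_rpow_rpow {θ : ℝ} (hθ : 0 < θ) (a b : ℝ) :
    θ * ∫ x in (0:ℝ)..1, x ^ a * (1 - x ^ θ) ^ b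
      = ∫ v in (0:ℝ)..1, v ^ ((a + 1) / θ - 1) * (1 - v) ^ b := by
  have himage : (fun x : ℝ => x ^ θ) '' Ioc 0 1 = Ioc 0 1 := by
    ext v
    refine ⟨?_, fun hv => ⟨v ^ θ⁻¹, ?_, ?_⟩⟩
    · rintro ⟨x, hx, rfl⟩
      exact ⟨rpow_pos_of_pos hx.1 θ, rpow_le_one hx.1.le hx.2 hθ.le⟩
    · exact ⟨rpow_pos_of_pos hv.1 _, rpow_le_one hv.1.le hv.2 (inv_pos.2 hθ).le⟩
    · exact rpow_inv_rpow hv.1.le hθ.ne'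
  have hderiv : ∀ x ∈ Ioc (0:ℝ) 1, HasDerivWithinAt (fun x : ℝ => x ^ θ) (θ * x ^ (θ - 1))
      (Ioc 0 1) x := fun x hx =>
    (hasDerivAt_rpow_const (Or.inl hx.1.ne')).hasDerivWithinAt
  have hinj : InjOn (fun x : ℝ => x ^ θ) (Ioc 0 1) :=
    (rpow_left_injOn hθ.ne').mono fun x hx => le_of_lt hx.1
  calc θ * ∫ x in (0:ℝ)..1, x ^ a * (1 - x ^ θ) ^ b
      = ∫ x in Ioc 0 1, |θ * x ^ (θ - 1)| • ((x ^ θ) ^ ((a + 1) / θ - 1) * (1 - x ^ θ) ^ b) := by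
        rw [intervalIntegral.integral_of_le zero_le_one, ← integral_const_mul]
        refine setIntegral_congr_fun measurableSet_Ioc fun x hx => ?_
        rw [smul_eq_mul, abs_of_pos (by have := hx.1; positivity), ← rpow_mul hx.1.le,
          mul_assoc, ← mul_assoc (x ^ (θ - 1)), ← rpow_add hx.1]
        congr 3
        field_simp
        ring
    _ = ∫ v in (fun x : ℝ => x ^ θ) '' Ioc 0 1, v ^ ((a + 1) / θ - 1) * (1 - v) ^ b :=
        (integral_image_eq_integral_abs_deriv_smul measurableSet_Ioc hderiv hinj
          (fun v => v ^ ((a + 1) / θ - 1) * (1 - v) ^ b)).symm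
    _ = ∫ v in (0:ℝ)..1, v ^ ((a + 1) / θ - 1) * (1 - v) ^ b := by
        rw [himage, intervalIntegral.integral_of_le zero_le_one]

theorem integral_rpow_mul_one_sub_rpow_rpow_eq_beta {θ a b : ℝ} (hθ : 0 < θ) (ha : -1 < a)
    (hb : -1 < b) :
    ∫ x in (0:ℝ)..1, x ^ a * (1 - x ^ θ) ^ b = ProbabilityTheory.beta ((a + 1) / θ) (b + 1) / θ := by
  have hα : 0 < (a + 1) / θ := div_pos (by linarith) hθ
  rw [eq_div_iff hθ.ne', mul_comm, mul_integral_rpow_mul_one_sub_rpow_rpow hθ,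
    ← integral_rpow_mul_one_sub_rpow_eq_beta hα (by linarith), add_sub_cancel_right]

theorem exp_neg_mul_log_div {t T : ℝ} (ht : 0 < t) (hT : 0 < T) (a : ℝ) :
    exp (-(a * log (T / t))) = (t / T) ^ a := by
  rw [rpow_def_of_pos (div_pos ht hT), ← inv_div, log_inv]
  ring_nf

theorem cast_choose_pred_mul_Gamma_mul_Gamma {m n : ℕ} (hm : 1 ≤ m) (hmn : m ≤ n) :
    ((n - 1).choose (m - 1) : ℝ) * Gamma m * Gamma ((n - m : ℕ) + 1) = Gamma n := by
  have hcast : ∀ j : ℕ, 1 ≤ j → (j : ℝ) = ((j - 1 : ℕ) : ℝ) + 1 := fun j hj => by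
    rw [Nat.cast_sub hj]; ring
  rw [hcast n (hm.trans hmn), hcast m hm, Gamma_nat_eq_factorial, Gamma_nat_eq_factorial,
    Gamma_nat_eq_factorial, ← Nat.choose_mul_factorial_mul_factorial (by omega : m - 1 ≤ n - 1),
    show n - 1 - (m - 1) = n - m by omega]
  push_cast
  ring

/-- For integers `n ≥ m ≥ 1`, `θ > 0` and `T > 0`,
`(1/T) ∫₀^T C(n-1,m-1) e^{-mθ ln(T/t)} (1 - e^{-θ ln(T/t)})^{n-m} dt
  = Γ(1/θ + m) Γ(n) / (θ Γ(m) Γ(n + 1/θ + 1))`. -/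
theorem stmt_6 (m n : ℕ) (hm : 1 ≤ m) (hmn : m ≤ n) (θ : ℝ) (hθ : 0 < θ)
    (T : ℝ) (hT : 0 < T) :
    (1 / T) * ∫ t in (0:ℝ)..T,
        (Nat.choose (n - 1) (m - 1) : ℝ) * Real.exp (-((m : ℝ) * θ * Real.log (T / t)))
          * (1 - Real.exp (-(θ * Real.log (T / t)))) ^ (n - m)
      = Real.Gamma (1 / θ + m) * Real.Gamma n
          / (θ * Real.Gamma m * Real.Gamma ((n : ℝ) + 1 / θ + 1)) := by
  set C : ℝ := (Nat.choose (n - 1) (m - 1) : ℝ)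
  set f : ℝ → ℝ := fun u => C * (u ^ ((m : ℝ) * θ) * (1 - u ^ θ) ^ ((n - m : ℕ) : ℝ))
  have hintegrand : ∀ t ∈ Ioc 0 T, C * exp (-((m : ℝ) * θ * log (T / t)))
      * (1 - exp (-(θ * log (T / t)))) ^ (n - m) = f (t / T) := fun t ht => by
    rw [exp_neg_mul_log_div ht.1 hT, exp_neg_mul_log_div ht.1 hT, mul_assoc]
    simp only [f, rpow_natCast]
  rw [intervalIntegral.integral_congr_ae (Filter.Eventually.of_forall fun t ht =>
      hintegrand t (by rwa [uIoc_of_le hT.le] at ht)),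
    intervalIntegral.integral_comp_div f hT.ne', zero_div, div_self hT.ne', smul_eq_mul,
    intervalIntegral.integral_const_mul,
    integral_rpow_mul_one_sub_rpow_rpow_eq_beta hθ (neg_one_lt_zero.trans_le (by positivity))
      (neg_one_lt_zero.trans_le (by positivity)),
    ProbabilityTheory.beta,
    show ((m : ℝ) * θ + 1) / θ = 1 / θ + m by field_simp; ring,
    show 1 / θ + m + (((n - m : ℕ) : ℝ) + 1) = (n : ℝ) + 1 / θ + 1 by
      rw [Nat.cast_sub hmn]; ring,
    ← cast_choose_pred_mul_Gamma_mul_Gamma hm hmn]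
  have hGm : 0 < Gamma m := Gamma_pos_of_pos (by exact_mod_cast hm)
  have hGn : 0 < Gamma ((n : ℝ) + 1 / θ + 1) := Gamma_pos_of_pos (by positivity)
  field_simp
  ring
end

section
/- Let p₁,...,p_J be nonnegative reals with Σ_j p_j ≤ 1. Then the total variation distance between the product distribution ⊗_{j=1}^J Ber(p_j) on {0,1}^J and the selector distribution sel(p) is at most (Σ_j p_j)². -/
/-!
Both distributions live on `{0,1}^J` and have total mass one, so `d_TV` is the total positive
part of `sel(p) - ⊗ Ber(p)`. At `0` this part vanishes by the Weierstrass product inequality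
`∏ (1 - p_j) ≥ 1 - ∑ p_j`; at `e_j` it is `p_j (1 - ∏_{i ≠ j} (1 - p_i)) ≤ p_j ∑ p`;
elsewhere `sel(p)` vanishes. Summing over `j` gives `(∑ p)²`.
-/

/-- The selector distribution `sel(p)` on `ℤ₊^J`: mass `p j` on the standard basis vector
`e_j`, and mass `1 - ∑ j, p j` on the zero vector. -/
noncomputable def sel {J : ℕ} (p : Fin J → ℝ) (x : Fin J → ℕ) : ℝ :=
  (if x = 0 then 1 - ∑ j, p j else 0) + ∑ j, if x = Pi.single j 1 then p j else 0

/-- The product Bernoulli distribution `⊗_j Ber(p j)` on `ℤ₊^J`. -/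
noncomputable def berProd {J : ℕ} (p : Fin J → ℝ) (x : Fin J → ℕ) : ℝ :=
  ∏ j, (if x j = 0 then 1 - p j else if x j = 1 then p j else 0)

open Finset

theorem Finset.one_sub_sum_le_prod_one_sub {ι R : Type*} [CommRing R] [LinearOrder R]
    [IsStrictOrderedRing R] (s : Finset ι) {f : ι → R} (h0 : ∀ i ∈ s, 0 ≤ f i)
    (h1 : ∀ i ∈ s, f i ≤ 1) :
    1 - ∑ i ∈ s, f i ≤ ∏ i ∈ s, (1 - f i) := by
  classical
  induction s using Finset.induction with
  | empty => simp
  | insert a s ha ih =>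
    simp only [mem_insert, forall_eq_or_imp] at h0 h1
    rw [sum_insert ha, prod_insert ha]
    have hprod : 0 ≤ ∏ i ∈ s, (1 - f i) := prod_nonneg fun i hi => sub_nonneg.2 (h1.2 i hi)
    have hsum : 0 ≤ ∑ i ∈ s, f i := sum_nonneg h0.2
    nlinarith [ih h0.2 h1.2]

theorem Finset.sum_abs_sub_le_two_mul_sum {ι : Type*} (s : Finset ι) {f g h : ι → ℝ}
    (hfg : ∑ i ∈ s, f i = ∑ i ∈ s, g i) (hgf : ∀ i ∈ s, g i - f i ≤ h i)
    (h0 : ∀ i ∈ s, 0 ≤ h i) :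
    ∑ i ∈ s, |f i - g i| ≤ 2 * ∑ i ∈ s, h i := by
  have hpt : ∀ i ∈ s, |f i - g i| ≤ (f i - g i) + 2 * h i := fun i hi =>
    abs_le.2 ⟨by linarith [hgf i hi], by linarith [h0 i hi]⟩
  calc ∑ i ∈ s, |f i - g i| ≤ ∑ i ∈ s, ((f i - g i) + 2 * h i) := sum_le_sum hpt
    _ = 2 * ∑ i ∈ s, h i := by rw [sum_add_distrib, sum_sub_distrib, hfg, sub_self, mul_sum,
        zero_add]

theorem Pi.single_left_inj {ι M : Type*} [DecidableEq ι] [Zero M] {a : M} (ha : a ≠ 0)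
    {i j : ι} : (Pi.single i a : ι → M) = Pi.single j a ↔ i = j := by
  refine ⟨fun h => ?_, fun h => h ▸ rfl⟩
  by_contra hij
  simpa [hij, ha] using congrFun h i

def binaryVectors (J : ℕ) : Finset (Fin J → ℕ) :=
  Fintype.piFinset fun _ => {0, 1}

section SelectorVsBernoulli

variable {J : ℕ} (p : Fin J → ℝ)

theorem zero_mem_binaryVectors : (0 : Fin J → ℕ) ∈ binaryVectors J := by
  simp [binaryVectors]

theorem single_mem_binaryVectors (j : Fin J) :
    (Pi.single j 1 : Fin J → ℕ) ∈ binaryVectors J := by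
  simp only [binaryVectors, Fintype.mem_piFinset]
  intro i
  by_cases h : i = j <;> simp [h]

theorem berProd_eq_zero_of_notMem {x : Fin J → ℕ} (hx : x ∉ binaryVectors J) :
    berProd p x = 0 := by
  simp only [binaryVectors, Fintype.mem_piFinset, mem_insert, mem_singleton, not_forall,
    not_or] at hx
  obtain ⟨j, hj0, hj1⟩ := hx
  exact prod_eq_zero (mem_univ j) (by simp [hj0, hj1])

theorem sel_eq_zero_of_ne_single {x : Fin J → ℕ} (h0 : x ≠ 0)
    (hsingle : ∀ j, x ≠ Pi.single j 1) : sel p x = 0 := by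
  simp [sel, h0, hsingle]

theorem sel_eq_zero_of_notMem {x : Fin J → ℕ} (hx : x ∉ binaryVectors J) : sel p x = 0 :=
  sel_eq_zero_of_ne_single p (by rintro rfl; exact hx zero_mem_binaryVectors)
    (by rintro j rfl; exact hx (single_mem_binaryVectors j))

theorem sel_zero : sel p 0 = 1 - ∑ j, p j := by
  simp [sel, eq_comm (a := (0 : Fin J → ℕ))]

theorem sel_single (j : Fin J) : sel p (Pi.single j 1) = p j := by
  simp [sel, Pi.single_left_inj one_ne_zero]

theorem berProd_zero : berProd p 0 = ∏ j, (1 - p j) := by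
  simp [berProd]

theorem berProd_single (j : Fin J) :
    berProd p (Pi.single j 1) = p j * ∏ i ∈ univ.erase j, (1 - p i) := by
  rw [berProd, ← mul_prod_erase univ _ (mem_univ j)]
  congr 1
  · simp
  · refine prod_congr rfl fun i hi => ?_
    simp [ne_of_mem_erase hi]

theorem sum_berProd : ∑ x ∈ binaryVectors J, berProd p x = 1 := by
  unfold berProd binaryVectors
  rw [← prod_univ_sum (fun _ => {0, 1})
    fun j v => if v = 0 then 1 - p j else if v = 1 then p j else 0]
  simp

theorem sum_sel : ∑ x ∈ binaryVectors J, sel p x = 1 := by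
  simp only [sel, sum_add_distrib, sum_ite_eq', zero_mem_binaryVectors, if_true]
  rw [sum_comm]
  simp [sum_ite_eq', single_mem_binaryVectors]

theorem sum_sel_ne_zero :
    ∑ x ∈ binaryVectors J, (if x = 0 then 0 else sel p x) = ∑ j, p j := by
  rw [sum_ite, filter_eq', if_pos zero_mem_binaryVectors, sum_const_zero, zero_add, filter_ne',
    sum_erase_eq_sub zero_mem_binaryVectors, sum_sel, sel_zero]
  ring

theorem sel_nonneg (hp : ∀ j, 0 ≤ p j) (hps : ∑ j, p j ≤ 1) (x : Fin J → ℕ) :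
    0 ≤ sel p x := by
  refine add_nonneg ?_ (sum_nonneg fun j _ => ?_) <;> split_ifs
  exacts [sub_nonneg.2 hps, le_rfl, hp j, le_rfl]

theorem berProd_nonneg (hp : ∀ j, 0 ≤ p j) (hp1 : ∀ j, p j ≤ 1) (x : Fin J → ℕ) :
    0 ≤ berProd p x :=
  prod_nonneg fun j _ => by
    split_ifs
    exacts [sub_nonneg.2 (hp1 j), hp j, le_rfl]

theorem sel_zero_le_berProd_zero (hp : ∀ j, 0 ≤ p j) (hp1 : ∀ j, p j ≤ 1) :
    sel p 0 ≤ berProd p 0 := by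
  rw [sel_zero, berProd_zero]
  exact univ.one_sub_sum_le_prod_one_sub (fun j _ => hp j) fun j _ => hp1 j

theorem one_sub_sum_mul_sel_le_berProd (hp : ∀ j, 0 ≤ p j) (hp1 : ∀ j, p j ≤ 1)
    {x : Fin J → ℕ} (hx : x ≠ 0) : (1 - ∑ j, p j) * sel p x ≤ berProd p x := by
  by_cases hsingle : ∃ j, x = Pi.single j 1
  · obtain ⟨j, rfl⟩ := hsingle
    rw [sel_single, berProd_single, mul_comm]
    refine mul_le_mul_of_nonneg_left ?_ (hp j)
    calc 1 - ∑ i, p i ≤ 1 - ∑ i ∈ univ.erase j, p i :=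
          sub_le_sub_left (sum_le_sum_of_subset_of_nonneg (erase_subset j univ)
            fun i _ _ => hp i) 1
      _ ≤ ∏ i ∈ univ.erase j, (1 - p i) :=
          one_sub_sum_le_prod_one_sub _ (fun i _ => hp i) fun i _ => hp1 i
  · push Not at hsingle
    rw [sel_eq_zero_of_ne_single p hx hsingle, mul_zero]
    exact berProd_nonneg p hp hp1 x

theorem sel_sub_berProd_le (hp : ∀ j, 0 ≤ p j) (hp1 : ∀ j, p j ≤ 1) (x : Fin J → ℕ) :
    sel p x - berProd p x ≤ (∑ j, p j) * if x = 0 then 0 else sel p x := by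
  split_ifs with hx
  · subst hx
    linarith [sel_zero_le_berProd_zero p hp hp1]
  · linarith [one_sub_sum_mul_sel_le_berProd p hp hp1 hx]

end SelectorVsBernoulli

/-- If `p₁, …, p_J ≥ 0` with `∑ j, p j ≤ 1`, then
`d_TV(⊗_j Ber(p j), sel(p)) ≤ (∑ j, p j)²`. -/
theorem stmt_8 {J : ℕ} (p : Fin J → ℝ) (hp : ∀ j, 0 ≤ p j) (hps : ∑ j, p j ≤ 1) :
    (1 / 2) * ∑' x : Fin J → ℕ, |berProd p x - sel p x| ≤ (∑ j, p j) ^ 2 := by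
  have hp1 : ∀ j, p j ≤ 1 := fun j => (single_le_sum (fun i _ => hp i) (mem_univ j)).trans hps
  have hS : 0 ≤ ∑ j, p j := sum_nonneg fun j _ => hp j
  rw [tsum_eq_sum fun x hx => by
    rw [berProd_eq_zero_of_notMem p hx, sel_eq_zero_of_notMem p hx, sub_self, abs_zero]]
  have h := (binaryVectors J).sum_abs_sub_le_two_mul_sum
    ((sum_berProd p).trans (sum_sel p).symm) (fun x _ => sel_sub_berProd_le p hp hp1 x)
    fun x _ => mul_nonneg hS (by split_ifs; exacts [le_rfl, sel_nonneg p hp hps x])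
  rw [← mul_sum, sum_sel_ne_zero] at h
  linarith
end

section
/- Let f : [0,∞) → (0,∞) be nondecreasing and suppose for some ϑ > 0 that (f(S) - f(0)) / ∫₀^S f(u) du → ϑ as S → ∞. Then (ln f(S))/S → ϑ as S → ∞. -/
/-!
Put `F S = ∫₀^S f`. Monotonicity gives `F S ≥ S f(0) → ∞`, so the hypothesis says `f / F → ϑ`.
Once `f ≤ c F` (resp. `c F ≤ f`) on `[T, ∞)`, the integral form of Grönwall's inequality gives
`F S ≤ F T e^{c (S - T)}` (resp. `≥`), hence `log F S / S → ϑ`. Finally `log f - log F = log (f / F)`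
converges, so it vanishes after division by `S`.
-/

open Filter MeasureTheory Real Set Topology

theorem le_mul_exp_of_le_add_mul_integral {F : ℝ → ℝ} (hF : Continuous F) {T K c : ℝ}
    (hc : 0 ≤ c) (h : ∀ S, T ≤ S → F S ≤ K + c * ∫ u in T..S, F u) {S : ℝ} (hS : T ≤ S) :
    F S ≤ K * exp (c * (S - T)) := by
  have hderiv (x : ℝ) : HasDerivAt (fun s => ∫ u in T..s, F u) (F x) x :=
    (hF.integral_hasStrictDerivAt T x).hasDerivAt
  -- Grönwall's differential inequality for the primitive `G = ∫_T F`, which has `G' ≤ c G + K`.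
  have hG : ∀ x ∈ Icc T S, (∫ u in T..x, F u) ≤ gronwallBound 0 c K (x - T) :=
    le_gronwallBound_of_liminf_deriv_right_le
      (fun x _ => (hderiv x).continuousAt.continuousWithinAt)
      (fun x _ _ hr => by
        simpa [slope_def_field, div_eq_inv_mul] using
          (hderiv x).hasDerivWithinAt.liminf_right_slope_le hr)
      (by simp) (fun x hx => by linarith [h x hx.1])
  have hcG : c * gronwallBound 0 c K (S - T) = K * (exp (c * (S - T)) - 1) := by
    rcases hc.eq_or_lt with rfl | hc
    · simp
    · rw [gronwallBound_of_K_ne_0 hc.ne']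
      field_simp
      ring
  calc F S ≤ K + c * ∫ u in T..S, F u := h S hS
    _ ≤ K + c * gronwallBound 0 c K (S - T) := by gcongr; exact hG S ⟨hS, le_rfl⟩
    _ = K * exp (c * (S - T)) := by rw [hcG]; ring

theorem mul_exp_le_of_add_mul_integral_le {F : ℝ → ℝ} (hF : Continuous F) {T K c : ℝ}
    (hc : 0 ≤ c) (h : ∀ S, T ≤ S → K + c * ∫ u in T..S, F u ≤ F S) {S : ℝ} (hS : T ≤ S) :
    K * exp (c * (S - T)) ≤ F S := by
  have := le_mul_exp_of_le_add_mul_integral hF.neg (K := -K) hc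
    (fun S hS => by simpa [intervalIntegral.integral_neg] using (by linarith [h S hS])) hS
  simp only [Pi.neg_apply] at this
  linarith

theorem tendsto_div_self_of_affine_bounds {L : ℝ → ℝ} {ϑ : ℝ}
    (hup : ∀ c > ϑ, ∃ b, ∀ᶠ S in atTop, L S ≤ b + c * S)
    (hlow : ∀ c < ϑ, ∃ b, ∀ᶠ S in atTop, b + c * S ≤ L S) :
    Tendsto (fun S => L S / S) atTop (𝓝 ϑ) := by
  have affine_div (b c : ℝ) : Tendsto (fun S : ℝ => (b + c * S) / S) atTop (𝓝 c) := by
    have : Tendsto (fun S : ℝ => b / S + c) atTop (𝓝 (0 + c)) :=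
      (tendsto_const_nhds.div_atTop tendsto_id).add_const c
    rw [zero_add] at this
    refine this.congr' ?_
    filter_upwards [eventually_ne_atTop 0] with S hS
    field_simp
  rw [tendsto_order]
  constructor
  · intro a ha
    obtain ⟨b, hb⟩ := hlow ((a + ϑ) / 2) (by linarith)
    filter_upwards [hb, (affine_div b _).eventually (lt_mem_nhds (by linarith : a < (a + ϑ) / 2)),
      eventually_gt_atTop 0] with S hS hlt hpos
    exact hlt.trans_le (div_le_div_of_nonneg_right hS hpos.le)
  · intro a ha
    obtain ⟨b, hb⟩ := hup ((a + ϑ) / 2) (by linarith)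
    filter_upwards [hb, (affine_div b _).eventually (gt_mem_nhds (by linarith : (a + ϑ) / 2 < a)),
      eventually_gt_atTop 0] with S hS hlt hpos
    exact (div_le_div_of_nonneg_right hS hpos.le).trans_lt hlt

section Primitive

variable {g : ℝ → ℝ} {a c : ℝ}

theorem log_integral_le_affine_of_le_mul_integral
    (hg : ∀ x y, IntervalIntegrable g volume x y) (hc : 0 ≤ c)
    (hpos : ∀ᶠ S in atTop, 0 < ∫ u in a..S, g u)
    (hle : ∀ᶠ S in atTop, g S ≤ c * ∫ u in a..S, g u) :
    ∃ b, ∀ᶠ S in atTop, log (∫ u in a..S, g u) ≤ b + c * S := by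
  set F := fun S => ∫ u in a..S, g u
  have hFc : Continuous F := intervalIntegral.continuous_primitive hg a
  obtain ⟨T, hT⟩ := eventually_atTop.mp (hpos.and hle)
  refine ⟨log (F T) - c * T, ?_⟩
  filter_upwards [eventually_ge_atTop T] with S hS
  have hgron : F S ≤ F T * exp (c * (S - T)) := by
    refine le_mul_exp_of_le_add_mul_integral hFc hc (fun S hS => ?_) hS
    have : ∫ u in T..S, g u ≤ ∫ u in T..S, c * F u :=
      intervalIntegral.integral_mono_on hS (hg T S)
        ((hFc.intervalIntegrable T S).const_mul c) (fun u hu => (hT u hu.1).2)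
    rw [intervalIntegral.integral_const_mul,
      ← intervalIntegral.integral_interval_sub_left (hg a S) (hg a T)] at this
    linarith
  calc log (F S) ≤ log (F T * exp (c * (S - T))) := log_le_log (hT S hS).1 hgron
    _ = log (F T) - c * T + c * S := by
      rw [log_mul (hT T le_rfl).1.ne' (exp_pos _).ne', log_exp]; ring

theorem affine_le_log_integral_of_mul_integral_le
    (hg : ∀ x y, IntervalIntegrable g volume x y) (hc : 0 ≤ c)
    (hpos : ∀ᶠ S in atTop, 0 < ∫ u in a..S, g u)
    (hge : ∀ᶠ S in atTop, c * ∫ u in a..S, g u ≤ g S) :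
    ∃ b, ∀ᶠ S in atTop, b + c * S ≤ log (∫ u in a..S, g u) := by
  set F := fun S => ∫ u in a..S, g u
  have hFc : Continuous F := intervalIntegral.continuous_primitive hg a
  obtain ⟨T, hT⟩ := eventually_atTop.mp (hpos.and hge)
  have hFT : 0 < F T := (hT T le_rfl).1
  refine ⟨log (F T) - c * T, ?_⟩
  filter_upwards [eventually_ge_atTop T] with S hS
  have hgron : F T * exp (c * (S - T)) ≤ F S := by
    refine mul_exp_le_of_add_mul_integral_le hFc hc (fun S hS => ?_) hS
    have : ∫ u in T..S, c * F u ≤ ∫ u in T..S, g u :=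
      intervalIntegral.integral_mono_on hS ((hFc.intervalIntegrable T S).const_mul c)
        (hg T S) (fun u hu => (hT u hu.1).2)
    rw [intervalIntegral.integral_const_mul,
      ← intervalIntegral.integral_interval_sub_left (hg a S) (hg a T)] at this
    linarith
  calc log (F T) - c * T + c * S = log (F T * exp (c * (S - T))) := by
        rw [log_mul hFT.ne' (exp_pos _).ne', log_exp]; ring
    _ ≤ log (F S) := log_le_log (by positivity) hgron

theorem tendsto_log_integral_div_of_tendsto_div_integral
    (hg : ∀ x y, IntervalIntegrable g volume x y) {ϑ : ℝ} (hϑ : 0 < ϑ)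
    (hpos : ∀ᶠ S in atTop, 0 < ∫ u in a..S, g u)
    (hratio : Tendsto (fun S => g S / ∫ u in a..S, g u) atTop (𝓝 ϑ)) :
    Tendsto (fun S => log (∫ u in a..S, g u) / S) atTop (𝓝 ϑ) := by
  refine tendsto_div_self_of_affine_bounds (fun c hc => ?_) (fun c hc => ?_)
  · refine log_integral_le_affine_of_le_mul_integral hg (by linarith) hpos ?_
    filter_upwards [hratio.eventually (gt_mem_nhds hc), hpos] with S hS hF
    exact ((div_lt_iff₀ hF).mp hS).le
  · obtain ⟨b, hb⟩ := affine_le_log_integral_of_mul_integral_le hg (le_max_right c 0) hpos <| by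
      filter_upwards [hratio.eventually (lt_mem_nhds (max_lt hc hϑ)), hpos] with S hS hF
      exact ((lt_div_iff₀ hF).mp hS).le
    refine ⟨b, ?_⟩
    filter_upwards [hb, eventually_ge_atTop 0] with S hS hS0
    nlinarith [le_max_left c 0]

end Primitive

theorem tendsto_log_div_of_tendsto_log_div_of_tendsto_div {u v : ℝ → ℝ} {ℓ ϑ : ℝ} (hℓ : ℓ ≠ 0)
    (huv : Tendsto (fun S => u S / v S) atTop (𝓝 ℓ))
    (hv : Tendsto (fun S => log (v S) / S) atTop (𝓝 ϑ)) :
    Tendsto (fun S => log (u S) / S) atTop (𝓝 ϑ) := by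
  have hlog : Tendsto (fun S => log (u S / v S) / S) atTop (𝓝 0) :=
    ((continuousAt_log hℓ).tendsto.comp huv).div_atTop tendsto_id
  have := hlog.add hv
  rw [zero_add] at this
  refine this.congr' ?_
  filter_upwards [huv.eventually_ne hℓ] with S hS
  obtain ⟨hu, hv⟩ := div_ne_zero_iff.mp hS
  rw [log_div hu hv, ← add_div, sub_add_cancel]

/-- If `f : [0,∞) → (0,∞)` is nondecreasing (and integrable on bounded intervals) and
`(f(S) - f(0)) / ∫₀^S f → ϑ > 0` as `S → ∞`, then `ln f(S) / S → ϑ`. -/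
theorem stmt_12 (f : ℝ → ℝ) (hpos : ∀ s, 0 ≤ s → 0 < f s)
    (hmono : MonotoneOn f (Set.Ici 0))
    (hint : ∀ S : ℝ, IntervalIntegrable f volume 0 S)
    (ϑ : ℝ) (hϑ : 0 < ϑ)
    (hlim : Tendsto (fun S => (f S - f 0) / ∫ u in (0:ℝ)..S, f u) atTop (nhds ϑ)) :
    Tendsto (fun S => Real.log (f S) / S) atTop (nhds ϑ) := by
  have hint' (x y : ℝ) : IntervalIntegrable f volume x y := (hint x).symm.trans (hint y)
  have hlower (S : ℝ) (hS : 0 ≤ S) : S * f 0 ≤ ∫ u in (0:ℝ)..S, f u := by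
    simpa [mul_comm] using intervalIntegral.integral_mono_on hS intervalIntegrable_const (hint S)
      fun x hx => hmono Set.self_mem_Ici hx.1 hx.1
  have htop : Tendsto (fun S => ∫ u in (0:ℝ)..S, f u) atTop atTop :=
    tendsto_atTop_mono' atTop (eventually_ge_atTop 0 |>.mono hlower)
      (tendsto_id.atTop_mul_const (hpos 0 le_rfl))
  have hratio : Tendsto (fun S => f S / ∫ u in (0:ℝ)..S, f u) atTop (𝓝 ϑ) := by
    have := hlim.add (tendsto_const_nhds (x := f 0) |>.div_atTop htop)
    rw [add_zero] at this
    exact this.congr fun S => by rw [← add_div, sub_add_cancel]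
  exact tendsto_log_div_of_tendsto_log_div_of_tendsto_div hϑ.ne' hratio
    (tendsto_log_integral_div_of_tendsto_div_integral hint' hϑ (htop.eventually_gt_atTop 0) hratio)
end

section
/- Let (y_t : t ∈ {τ, τ+1, ...}) be a sequence of positive reals with y_{t+1} - y_t ∈ [0, m] for all t ≥ τ, and suppose (y_T - y_τ) / (Σ_{t=τ}^{T-1} y_t / t) → ϑ > 0 as T → ∞. Then (ln y_T)/(ln(T/τ)) → ϑ as T → ∞. -/
/-!
Put `S T = ∑_{τ ≤ t < T} y t / t`. Since `y` is nondecreasing and positive, `S T → ∞`, so the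
hypothesis says `y T / S T → ϑ`. As `S (T + 1) / S T = 1 + (y T / S T) / T`, this gives
`T * (log S (T + 1) - log S T) → ϑ`, and Stolz–Cesàro against `log T` yields
`log S T / log T → ϑ`. Finally `log y T = log (y T / S T) + log S T` with a convergent first
term, and `log (T / τ) = log T - log τ`.
-/

open Filter Topology Asymptotics

/-- Stolz–Cesàro. -/
theorem tendsto_div_of_isLittleO_sub_mul {a b : ℕ → ℝ} {ϑ : ℝ} (hb : Monotone b)
    (hb_top : Tendsto b atTop atTop)
    (h : (fun n => a (n + 1) - a n - ϑ * (b (n + 1) - b n)) =o[atTop]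
      fun n => b (n + 1) - b n) :
    Tendsto (fun n => a n / b n) atTop (𝓝 ϑ) := by
  have htel (n : ℕ) : ∑ i ∈ Finset.range n, (a (i + 1) - a i - ϑ * (b (i + 1) - b i)) =
      (a n - ϑ * b n) - (a 0 - ϑ * b 0) := by
    rw [← Finset.sum_range_sub (fun i => a i - ϑ * b i)]
    exact Finset.sum_congr rfl fun _ _ => by ring
  have hb_const : (fun _ => b 0) =o[atTop] b :=
    isLittleO_const_left.2 <| .inr <| tendsto_norm_atTop_atTop.comp hb_top
  have hsum := h.sum_range (fun n => sub_nonneg.2 (hb n.le_succ)) <| by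
    simp only [Finset.sum_range_sub]
    simpa only [sub_eq_add_neg] using tendsto_atTop_add_const_right _ (-b 0) hb_top
  simp only [htel, Finset.sum_range_sub] at hsum
  have hmain : (fun n => a n - ϑ * b n) =o[atTop] b :=
    ((hsum.trans_isBigO ((isBigO_refl b _).sub hb_const.isBigO)).add
      (isLittleO_const_left.2 <| .inr <| tendsto_norm_atTop_atTop.comp hb_top)).congr_left
      fun n => sub_add_cancel _ (a 0 - ϑ * b 0)
  have := (hmain.tendsto_div_nhds_zero).const_add ϑ
  rw [add_zero] at this
  refine this.congr' ?_
  filter_upwards [hb_top.eventually_ne_atTop 0] with n hn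
  field_simp
  ring

theorem monotone_log_natCast : Monotone fun n : ℕ => Real.log n := by
  intro m n hmn
  rcases m.eq_zero_or_pos with rfl | hm
  · simpa using Real.log_natCast_nonneg n
  · exact Real.log_le_log (by exact_mod_cast hm) (by exact_mod_cast hmn)

theorem tendsto_natCast_mul_log_succ_sub_log :
    Tendsto (fun n : ℕ => n * (Real.log (n + 1 : ℕ) - Real.log n)) atTop (𝓝 1) := by
  have h := Real.tendsto_nat_mul_log_one_add_of_tendsto (g := fun n => 1 / n) <|
    (tendsto_const_nhds (x := (1 : ℝ))).congr' <| by
      filter_upwards [eventually_ne_atTop 0] with n hn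
      field_simp
  refine h.congr' ?_
  filter_upwards [eventually_ne_atTop 0] with n hn
  have hn' : (n : ℝ) ≠ 0 := by exact_mod_cast hn
  rw [← Real.log_div (by positivity) hn']
  push_cast
  congr 2
  field_simp

theorem tendsto_div_log_of_tendsto_natCast_mul_sub {a : ℕ → ℝ} {ϑ : ℝ}
    (h : Tendsto (fun n : ℕ => n * (a (n + 1) - a n)) atTop (𝓝 ϑ)) :
    Tendsto (fun n : ℕ => a n / Real.log n) atTop (𝓝 ϑ) := by
  refine tendsto_div_of_isLittleO_sub_mul monotone_log_natCast
    (Real.tendsto_log_atTop.comp tendsto_natCast_atTop_atTop) ?_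
  have hpos : ∀ᶠ n : ℕ in atTop, 0 < Real.log (n + 1 : ℕ) - Real.log n := by
    filter_upwards [eventually_ne_atTop 0] with n hn
    exact sub_pos.2 (Real.log_lt_log (by positivity) (by push_cast; linarith))
  rw [isLittleO_iff_tendsto' (hpos.mono fun n hn h => absurd h hn.ne')]
  have := (h.div tendsto_natCast_mul_log_succ_sub_log one_ne_zero).sub_const ϑ
  rw [div_one, sub_self] at this
  refine this.congr' ?_
  filter_upwards [hpos, eventually_ne_atTop 0] with n hn hn0
  have : (n : ℝ) ≠ 0 := by exact_mod_cast hn0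
  simp only [Pi.div_apply]
  field_simp

theorem tendsto_natCast_mul_log_sub_of_tendsto {S : ℕ → ℝ} {ϑ : ℝ}
    (hS : ∀ᶠ n in atTop, 0 < S n)
    (h : Tendsto (fun n : ℕ => n * ((S (n + 1) - S n) / S n)) atTop (𝓝 ϑ)) :
    Tendsto (fun n : ℕ => n * (Real.log (S (n + 1)) - Real.log (S n))) atTop (𝓝 ϑ) := by
  refine (Real.tendsto_nat_mul_log_one_add_of_tendsto h).congr' ?_
  filter_upwards [hS, (tendsto_add_atTop_nat 1).eventually hS] with n hn hn'
  rw [← Real.log_div hn'.ne' hn.ne', one_add_div hn.ne', add_sub_cancel]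

theorem tendsto_sum_Ico_div_natCast_atTop {y : ℕ → ℝ} {τ : ℕ} {δ : ℝ} (hδ : 0 < δ)
    (hy : ∀ t, τ ≤ t → δ ≤ y t) :
    Tendsto (fun T => ∑ t ∈ Finset.Ico τ T, y t / t) atTop atTop := by
  have hharm : Tendsto (fun T => ∑ t ∈ Finset.range T, (1 : ℝ) / t) atTop atTop :=
    (not_summable_iff_tendsto_nat_atTop_of_nonneg fun n => by positivity).1
      Real.not_summable_one_div_natCast
  have hharm' : Tendsto (fun T => δ * ∑ t ∈ Finset.Ico τ T, (1 : ℝ) / t) atTop atTop := by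
    refine (tendsto_atTop_add_const_right _ (-∑ t ∈ Finset.range τ, (1 : ℝ) / t) hharm
      |>.const_mul_atTop hδ).congr' ?_
    filter_upwards [eventually_ge_atTop τ] with T hT
    rw [Finset.sum_Ico_eq_sub _ hT, sub_eq_add_neg]
  refine tendsto_atTop_mono (fun T => ?_) hharm'
  rw [Finset.mul_sum]
  refine Finset.sum_le_sum fun t ht => ?_
  rw [mul_one_div]
  gcongr
  exact hy t (Finset.mem_Ico.1 ht).1

theorem Filter.Tendsto.div_of_sub_div {α : Type*} {l : Filter α} {f S : α → ℝ} {C ϑ : ℝ}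
    (h : Tendsto (fun x => (f x - C) / S x) l (𝓝 ϑ)) (hS : Tendsto S l atTop) :
    Tendsto (fun x => f x / S x) l (𝓝 ϑ) := by
  have := h.add (hS.inv_tendsto_atTop.const_mul C)
  rw [mul_zero, add_zero] at this
  refine this.congr' ?_
  filter_upwards [hS.eventually_ne_atTop 0] with x hx
  simp only [Pi.inv_apply]
  field_simp
  ring

theorem tendsto_log_div_of_tendsto_div {α : Type*} {l : Filter α} {y S g : α → ℝ} {c ϑ : ℝ}
    (hg : Tendsto g l atTop) (hc : Tendsto (fun x => y x / S x) l (𝓝 c)) (hc0 : c ≠ 0)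
    (hS : Tendsto (fun x => Real.log (S x) / g x) l (𝓝 ϑ)) :
    Tendsto (fun x => Real.log (y x) / g x) l (𝓝 ϑ) := by
  have := ((hc.log hc0).div_atTop hg).add hS
  rw [zero_add] at this
  refine this.congr' ?_
  filter_upwards [hc.eventually_ne hc0] with x hx
  rw [div_ne_zero_iff] at hx
  rw [← add_div, Real.log_div hx.1 hx.2, sub_add_cancel]

theorem tendsto_div_log_div_const_of_tendsto_div_log {f : ℕ → ℝ} {c ϑ : ℝ} (hc : c ≠ 0)
    (h : Tendsto (fun n : ℕ => f n / Real.log n) atTop (𝓝 ϑ)) :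
    Tendsto (fun n : ℕ => f n / Real.log (n / c)) atTop (𝓝 ϑ) := by
  have hlog_top : Tendsto (fun n : ℕ => Real.log n) atTop atTop :=
    Real.tendsto_log_atTop.comp tendsto_natCast_atTop_atTop
  have hlog_c := (tendsto_const_nhds (x := Real.log c)).div_atTop hlog_top
  have := h.div (tendsto_const_nhds.sub hlog_c) (by norm_num : (1 : ℝ) - 0 ≠ 0)
  rw [sub_zero, div_one] at this
  refine this.congr' ?_
  filter_upwards [eventually_ne_atTop 0, hlog_top.eventually_ne_atTop 0,
    hlog_top.eventually_gt_atTop (Real.log c)] with n hn hlog hlogc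
  rw [Real.log_div (Nat.cast_ne_zero.2 hn) hc]
  have : Real.log n - Real.log c ≠ 0 := sub_ne_zero.2 hlogc.ne'
  simp only [Pi.div_apply]
  field_simp

theorem stmt_14_general (τ : ℕ) (hτ : 1 ≤ τ) (m : ℝ)
    (y : ℕ → ℝ) (hpos : ∀ t, τ ≤ t → 0 < y t)
    (hinc : ∀ t, τ ≤ t → 0 ≤ y (t + 1) - y t ∧ y (t + 1) - y t ≤ m)
    (ϑ : ℝ) (hϑ : 0 < ϑ)
    (hlim : Tendsto (fun T : ℕ => (y T - y τ) / ∑ t ∈ Finset.Ico τ T, y t / (t : ℝ))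
      atTop (nhds ϑ)) :
    Tendsto (fun T : ℕ => Real.log (y T) / Real.log ((T : ℝ) / (τ : ℝ))) atTop (nhds ϑ) := by
  set S : ℕ → ℝ := fun T => ∑ t ∈ Finset.Ico τ T, y t / t
  have hmono : ∀ t, τ ≤ t → y τ ≤ y t := fun t ht =>
    monotoneOn_nat_Ici_of_le_succ (fun n hn => sub_nonneg.1 (hinc n hn).1)
      (Set.mem_Ici.2 le_rfl) ht ht
  have hS_top : Tendsto S atTop atTop := tendsto_sum_Ico_div_natCast_atTop (hpos τ le_rfl) hmono
  have hc : Tendsto (fun T => y T / S T) atTop (𝓝 ϑ) := hlim.div_of_sub_div hS_top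
  have hlogS : Tendsto (fun T => Real.log (S T) / Real.log T) atTop (𝓝 ϑ) := by
    refine tendsto_div_log_of_tendsto_natCast_mul_sub <|
      tendsto_natCast_mul_log_sub_of_tendsto (hS_top.eventually_gt_atTop 0) <| hc.congr' ?_
    filter_upwards [eventually_ge_atTop τ, eventually_ne_atTop 0] with T hT hT0
    have : (T : ℝ) ≠ 0 := Nat.cast_ne_zero.2 hT0
    simp only [S, Finset.sum_Ico_succ_top hT, add_sub_cancel_left]
    field_simp
  exact tendsto_div_log_div_const_of_tendsto_div_log (Nat.cast_ne_zero.2 (by omega)) <|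
    tendsto_log_div_of_tendsto_div (Real.tendsto_log_atTop.comp tendsto_natCast_atTop_atTop)
      hc hϑ.ne' hlogS

/-- If `(y_t : t ≥ τ)` is a sequence of positive reals with increments in `[0, m]` and
`(y_T - y_τ) / ∑_{t=τ}^{T-1} y_t/t → ϑ > 0` as `T → ∞`, then
`ln y_T / ln(T/τ) → ϑ`. -/
theorem stmt_14 (τ : ℕ) (hτ : 1 ≤ τ) (m : ℝ) (hm : 1 ≤ m)
    (y : ℕ → ℝ) (hpos : ∀ t, τ ≤ t → 0 < y t)
    (hinc : ∀ t, τ ≤ t → 0 ≤ y (t + 1) - y t ∧ y (t + 1) - y t ≤ m)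
    (ϑ : ℝ) (hϑ : 0 < ϑ)
    (hlim : Tendsto (fun T : ℕ => (y T - y τ) / ∑ t ∈ Finset.Ico τ T, y t / (t : ℝ))
      atTop (nhds ϑ)) :
    Tendsto (fun T : ℕ => Real.log (y T) / Real.log ((T : ℝ) / (τ : ℝ))) atTop (nhds ϑ) :=
  stmt_14_general τ hτ m y hpos hinc ϑ hϑ hlim
end
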